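/- arXiv:1609.07274 — 2 statements merged into one kernel-verified Lean document; each statement's English description precedes it below -/
import Mathlib

section
/- Let R be a finite non-commutative ring of order n with Z(R) = {0}. Then γ(Γ(R)) + γ(Γ̄(R)) ≠ n - 1. -/
open scoped Classical

noncomputable section

/-- The commuting graph of a (non-unital, possibly non-commutative) ring `R`:
vertices are the non-central elements, and two distinct vertices are adjacent
iff they commute. -/
def commutingGraph (R : Type*) [NonUnitalRing R] :
    SimpleGraph {x : R // x ∉ Set.center R} where
  Adj a b := a ≠ b ∧ (a : R) * b = (b : R) * a
  symm := by constructor; rintro a b ⟨h1, h2⟩; exact ⟨h1.symm, h2.symm⟩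
  loopless := by constructor; rintro a ⟨h, -⟩; exact h rfl

/-- A dominating set: every vertex not in `D` is adjacent to some vertex of `D`. -/
def SimpleGraph.IsDominatingSet {V : Type*} (G : SimpleGraph V) (D : Finset V) : Prop :=
  ∀ v, v ∉ D → ∃ u ∈ D, G.Adj u v

/-- The domination number: the minimum cardinality of a dominating set. -/
noncomputable def SimpleGraph.dominationNumber {V : Type*} [Fintype V] (G : SimpleGraph V) : ℕ :=
  sInf {n | ∃ D : Finset V, G.IsDominatingSet D ∧ D.card = n}

/-- The signed domination number: the minimum total weight of a function
`f : V → {-1, 1}` whose sum over every closed neighbourhood is at least `1`. -/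
noncomputable def SimpleGraph.signedDominationNumber {V : Type*} [Fintype V]
    (G : SimpleGraph V) : ℤ :=
  sInf {w : ℤ | ∃ f : V → ℤ, (∀ v, f v = 1 ∨ f v = -1) ∧
    (∀ v : V, 1 ≤ ∑ u ∈ Finset.univ.filter (fun u => G.Adj v u ∨ u = v), f u) ∧
    w = ∑ v, f v}

/-- Underlying type of the ring `E`. -/
def Ering : Type := ZMod 2 × ZMod 2

instance : Fintype Ering := inferInstanceAs (Fintype (ZMod 2 × ZMod 2))
instance : DecidableEq Ering := inferInstanceAs (DecidableEq (ZMod 2 × ZMod 2))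
instance : AddCommGroup Ering := inferInstanceAs (AddCommGroup (ZMod 2 × ZMod 2))
instance : Mul Ering := ⟨fun a b => (b.1 * a.1, b.1 * a.2)⟩

/-- `E = ⟨x,y : 2x=2y=0, x²=x, y²=y, xy=x, yx=y⟩`, realized on `ZMod 2 × ZMod 2`
with `x = (1,0)`, `y = (1,1)` and multiplication `a * b = (b₁a₁, b₁a₂)`. -/
instance : NonUnitalRing Ering :=
  { (inferInstance : AddCommGroup Ering), (inferInstance : Mul Ering) with
    left_distrib := by decide
    right_distrib := by decide
    zero_mul := by decide
    mul_zero := by decide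
    mul_assoc := by decide }

/-- Underlying type of the ring `F`. -/
def Fring : Type := ZMod 2 × ZMod 2

instance : Fintype Fring := inferInstanceAs (Fintype (ZMod 2 × ZMod 2))
instance : DecidableEq Fring := inferInstanceAs (DecidableEq (ZMod 2 × ZMod 2))
instance : AddCommGroup Fring := inferInstanceAs (AddCommGroup (ZMod 2 × ZMod 2))
instance : Mul Fring := ⟨fun a b => (a.1 * b.1, a.1 * b.2)⟩

/-- `F = ⟨x,y : 2x=2y=0, x²=x, y²=y, xy=y, yx=x⟩`, realized on `ZMod 2 × ZMod 2`
with `x = (1,0)`, `y = (1,1)` and multiplication `a * b = (a₁b₁, a₁b₂)`. -/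
instance : NonUnitalRing Fring :=
  { (inferInstance : AddCommGroup Fring), (inferInstance : Mul Fring) with
    left_distrib := by decide
    right_distrib := by decide
    zero_mul := by decide
    mul_zero := by decide
    mul_assoc := by decide }

/-!
Write `C(x)` for the centralizer of `x`, an additive subgroup of `R`. If `x` and `y` do not
commute, `C(x) ∩ C(y)` is a proper subgroup of both, so its order `i` satisfies `2i ≤ |C(x)|`
and `2i ≤ |C(y)|`. The set `{x, y}` together with all vertices outside `C(x) ∪ C(y)` dominates
`Γ(R)`, and `{x, y}` together with the nonzero elements of `C(x) ∩ C(y)` dominates `Γ̄(R)`;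
hence `γ(Γ) + γ(Γ̄) ≤ n - 2` as soon as `|C(x)| + |C(y)| ≥ 2i + 5`. The other cases:
* if `C(x) = {0, x}` for every nonzero `x`, then `Γ(R)` has no edges and `γ(Γ) + γ(Γ̄) ≥ n`;
* if `C(u) = {0, u}` but `|C(v)| ≥ 3`, then `u` alone dominates `Γ̄(R)`, and `|C(v)| ≥ 4`
  because an element of additive order `2` commutes with every element of additive order `3`;
* if all centralizers have order at least `3`, the bound fails for a noncommuting pair only
  when `(i, |C(x)|, |C(y)|)` is `(1, 3, 3)` or `(2, 4, 4)`. In the first case the centralizers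
  of `x`, `y`, `x + y` pairwise meet in `0` and `{x, y, x + y}` replaces `{x, y}`; in the
  second a nonzero `t ∈ C(x) ∩ C(y)` has `C(t) ⊋ C(t) ∩ C(x) ∋ 0, x, t`, so `|C(t)| ≥ 6`,
  and `t` with any element not commuting with it satisfies the bound.
-/

open Finset

theorem Finset.card_union_union_add_two {α : Type*} [DecidableEq α] {A B C : Finset α}
    {a : α} (hA : a ∈ A) (hB : a ∈ B) (hC : a ∈ C) (hAB : (A ∩ B).card = 1)
    (hAC : (A ∩ C).card = 1) (hBC : (B ∩ C).card = 1) :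
    (A ∪ B ∪ C).card + 2 = A.card + B.card + C.card := by
  have h1 := card_union_add_card_inter A B
  have h2 := card_union_add_card_inter (A ∪ B) C
  have h3 := card_union_add_card_inter (A ∩ C) (B ∩ C)
  rw [← union_inter_distrib_right] at h3
  have h4 := card_pos.2 ⟨a, mem_inter.2 ⟨mem_inter.2 ⟨hA, hC⟩, mem_inter.2 ⟨hB, hC⟩⟩⟩
  have h5 := card_le_card (inter_subset_left : A ∩ C ∩ (B ∩ C) ⊆ A ∩ C)
  omega

namespace SimpleGraph

variable {V : Type*} [Fintype V] (G : SimpleGraph V)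

theorem isDominatingSet_univ : G.IsDominatingSet univ :=
  fun v hv => absurd (mem_univ v) hv

theorem dominationNumber_le_card {D : Finset V} (hD : G.IsDominatingSet D) :
    G.dominationNumber ≤ D.card :=
  Nat.sInf_le ⟨D, hD, rfl⟩

theorem exists_isDominatingSet_card_eq_dominationNumber :
    ∃ D, G.IsDominatingSet D ∧ D.card = G.dominationNumber :=
  Nat.sInf_mem (s := {n | ∃ D : Finset V, G.IsDominatingSet D ∧ D.card = n})
    ⟨_, univ, G.isDominatingSet_univ, rfl⟩

theorem dominationNumber_pos [Nonempty V] : 0 < G.dominationNumber := by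
  obtain ⟨D, hD, hcard⟩ := G.exists_isDominatingSet_card_eq_dominationNumber
  rw [← hcard, card_pos]
  by_contra hempty
  rw [not_nonempty_iff_eq_empty] at hempty
  obtain ⟨u, hu, -⟩ := hD (Classical.arbitrary V) (by simp [hempty])
  simp [hempty] at hu

theorem dominationNumber_bot : (⊥ : SimpleGraph V).dominationNumber = Fintype.card V := by
  obtain ⟨D, hD, hcard⟩ := (⊥ : SimpleGraph V).exists_isDominatingSet_card_eq_dominationNumber
  have hD_univ : D = univ := eq_univ_of_forall fun v => by
    by_contra hv
    obtain ⟨u, -, hadj⟩ := hD v hv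
    exact hadj
  rw [← hcard, hD_univ, card_univ]

/-- `S` together with all vertices outside `A` dominates `G`. -/
theorem dominationNumber_add_card_le (S A : Finset V)
    (hcover : ∀ v ∈ A, v ∉ S → ∃ u ∈ S, G.Adj u v) :
    G.dominationNumber + A.card ≤ Fintype.card V + S.card := by
  have hD : G.IsDominatingSet (S ∪ Aᶜ) := fun v hv => by
    simp only [mem_union, mem_compl, not_or, not_not] at hv
    obtain ⟨u, hu, hadj⟩ := hcover v hv.2 hv.1
    exact ⟨u, mem_union_left _ hu, hadj⟩
  have hunion := card_union_le S Aᶜ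
  have hcompl := card_compl_add_card A
  have := G.dominationNumber_le_card hD
  omega

end SimpleGraph

theorem AddSubgroup.natCard_eq_card {G : Type*} [AddGroup G] {L : AddSubgroup G} {t : Finset G}
    (h : ∀ r, r ∈ L ↔ r ∈ t) : Nat.card L = t.card :=
  (Nat.card_congr (Equiv.subtypeEquivRight h)).trans (Nat.card_eq_finsetCard t)

/-- `z = w + u` commutes with `z + z = -w`, hence with `w`, and so does `u = z - w`. -/
theorem commute_of_two_nsmul_eq_zero_of_three_nsmul_eq_zero {R : Type*}
    [NonUnitalNonAssocRing R] {u w : R} (hu : 2 • u = 0) (hw : 3 • w = 0) : Commute u w := by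
  have hdouble : w + u + (w + u) = -w := by
    rw [two_nsmul] at hu
    rw [succ_nsmul, two_nsmul] at hw
    calc w + u + (w + u) = w + w + w + (u + u) - w := by abel
      _ = -w := by rw [hu, hw]; abel
  have hzw : Commute (w + u) w := by
    have := (Commute.refl (w + u)).add_right (Commute.refl (w + u))
    rwa [hdouble, Commute.neg_right_iff] at this
  simpa using hzw.sub_left (Commute.refl w)

section Center

variable {R : Type*} [NonUnitalRing R]

theorem ne_zero_of_not_commute {x y : R} (h : ¬Commute x y) : x ≠ 0 := by
  rintro rfl
  exact h (Commute.zero_left y)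

theorem notMem_center_of_not_commute {x y : R} (h : ¬Commute x y) : x ∉ Set.center R :=
  fun hx => h ((Semigroup.mem_center_iff.1 hx y).symm)

theorem ne_zero_of_notMem_center {x : R} (hx : x ∉ Set.center R) : x ≠ 0 := by
  rintro rfl
  exact hx Set.zero_mem_center

theorem exists_not_commute {x : R} (hx : x ∉ Set.center R) : ∃ y, ¬Commute x y := by
  by_contra! h
  exact hx (Semigroup.mem_center_iff.2 fun y => (h y).symm)

theorem notMem_center_of_ne_zero (hz : Set.center R = {0}) {x : R} (hx : x ≠ 0) :
    x ∉ Set.center R := by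
  rwa [hz, Set.mem_singleton_iff]

end Center

section Centralizer

variable {R : Type*} [NonUnitalRing R] [Fintype R]

def centralizerFinset (x : R) : Finset R := {r | Commute x r}

@[simp]
theorem mem_centralizerFinset {x r : R} : r ∈ centralizerFinset x ↔ Commute x r := by
  simp [centralizerFinset]

theorem zero_mem_centralizerFinset (x : R) : 0 ∈ centralizerFinset x :=
  mem_centralizerFinset.2 (Commute.zero_right x)

theorem self_mem_centralizerFinset (x : R) : x ∈ centralizerFinset x :=
  mem_centralizerFinset.2 (Commute.refl x)

theorem mem_centralizer_singleton_toAddSubgroup {x r : R} :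
    r ∈ (NonUnitalSubring.centralizer {x}).toAddSubgroup ↔ r ∈ centralizerFinset x :=
  (mem_centralizerFinset.trans ⟨fun h _ hg => (Set.mem_singleton_iff.1 hg) ▸ h,
    fun h => h x rfl⟩).symm

theorem card_centralizerFinset_inter_dvd (x y : R) :
    (centralizerFinset x ∩ centralizerFinset y).card ∣ (centralizerFinset x).card := by
  rw [← AddSubgroup.natCard_eq_card fun _ => mem_centralizer_singleton_toAddSubgroup,
    ← AddSubgroup.natCard_eq_card (L := (NonUnitalSubring.centralizer {x}).toAddSubgroup ⊓
      (NonUnitalSubring.centralizer {y}).toAddSubgroup) fun _ => by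
        rw [AddSubgroup.mem_inf, mem_inter, mem_centralizer_singleton_toAddSubgroup,
          mem_centralizer_singleton_toAddSubgroup]]
  exact AddSubgroup.card_dvd_of_le inf_le_left

theorem addOrderOf_dvd_card_centralizerFinset {x r : R} (hr : r ∈ centralizerFinset x) :
    addOrderOf r ∣ (centralizerFinset x).card := by
  rw [← AddSubgroup.natCard_eq_card fun _ => mem_centralizer_singleton_toAddSubgroup,
    ← Nat.card_zmultiples]
  exact AddSubgroup.card_dvd_of_le
    (AddSubgroup.zmultiples_le.2 (mem_centralizer_singleton_toAddSubgroup.2 hr))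

theorem two_mul_card_centralizerFinset_inter_le {x y r : R} (hrx : r ∈ centralizerFinset x)
    (hry : r ∉ centralizerFinset y) :
    2 * (centralizerFinset x ∩ centralizerFinset y).card ≤ (centralizerFinset x).card := by
  obtain ⟨k, hk⟩ := card_centralizerFinset_inter_dvd x y
  have hlt : (centralizerFinset x ∩ centralizerFinset y).card < (centralizerFinset x).card :=
    card_lt_card ⟨inter_subset_left, fun h => hry (mem_inter.1 (h hrx)).2⟩
  have hk2 : 2 ≤ k := by
    by_contra! hk2
    interval_cases k <;> omega
  rw [hk, mul_comm]
  exact Nat.mul_le_mul_left _ hk2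

theorem two_mul_card_centralizerFinset_inter_le_of_not_commute {x y : R} (hxy : ¬Commute x y) :
    2 * (centralizerFinset x ∩ centralizerFinset y).card ≤ (centralizerFinset x).card :=
  two_mul_card_centralizerFinset_inter_le (self_mem_centralizerFinset x)
    (fun h => hxy (mem_centralizerFinset.1 h).symm)

theorem card_centralizerFinset_inter_pos (x y : R) :
    0 < (centralizerFinset x ∩ centralizerFinset y).card :=
  card_pos.2 ⟨0, mem_inter.2 ⟨zero_mem_centralizerFinset x, zero_mem_centralizerFinset y⟩⟩

theorem pair_subset_centralizerFinset (x : R) : {0, x} ⊆ centralizerFinset x :=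
  insert_subset (zero_mem_centralizerFinset x)
    (singleton_subset_iff.2 (self_mem_centralizerFinset x))

theorem two_le_card_centralizerFinset {x : R} (hx : x ≠ 0) : 2 ≤ (centralizerFinset x).card :=
  card_pair hx.symm ▸ card_le_card (pair_subset_centralizerFinset x)

theorem centralizerFinset_eq_pair {x : R} (hx : x ≠ 0) (h : (centralizerFinset x).card = 2) :
    centralizerFinset x = {0, x} :=
  (eq_of_subset_of_card_le (pair_subset_centralizerFinset x)
    (by rw [h, card_pair hx.symm])).symm

theorem card_centralizerFinset_ne_three {u w : R} (hu0 : u ≠ 0)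
    (hu : (centralizerFinset u).card = 2) : (centralizerFinset w).card ≠ 3 := by
  intro hw
  have hu2 : 2 • u = 0 := by
    have hmem : u + u ∈ centralizerFinset u :=
      mem_centralizerFinset.2 ((Commute.refl u).add_right (Commute.refl u))
    rw [centralizerFinset_eq_pair hu0 hu, mem_insert, mem_singleton, add_eq_right] at hmem
    rw [two_nsmul]
    exact hmem.resolve_right hu0
  have hw3 : 3 • w = 0 := addOrderOf_dvd_iff_nsmul_eq_zero.1
    (hw ▸ addOrderOf_dvd_card_centralizerFinset (self_mem_centralizerFinset w))
  have hsub : centralizerFinset u ⊆ centralizerFinset w := by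
    rw [centralizerFinset_eq_pair hu0 hu]
    exact insert_subset (zero_mem_centralizerFinset w) (singleton_subset_iff.2
      (mem_centralizerFinset.2 (commute_of_two_nsmul_eq_zero_of_three_nsmul_eq_zero hu2 hw3).symm))
  have := card_centralizerFinset_inter_dvd w u
  rw [inter_eq_right.2 hsub, hu, hw] at this
  omega

end Centralizer

section CommutingGraph

variable {R : Type*} [NonUnitalRing R] [Fintype R]

theorem card_nonCentral_add_one (hz : Set.center R = {0}) :
    Fintype.card {x : R // x ∉ Set.center R} + 1 = Fintype.card R := by
  have hcenter : Fintype.card {x : R // x ∈ Set.center R} = 1 :=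
    Fintype.card_of_subtype {0} fun x => by simp [hz]
  rw [Fintype.card_subtype_compl, hcenter]
  have := Fintype.card_pos (α := R)
  omega

theorem card_le_card_subtype_nonCentral_add_one (hz : Set.center R = {0}) (T : Finset R) :
    T.card ≤ (T.subtype (· ∉ Set.center R)).card + 1 := by
  rw [card_subtype, ← card_filter_add_card_filter_not (· ∉ Set.center R)]
  have : (T.filter fun x => ¬x ∉ Set.center R) ⊆ {0} := fun x hx => by
    simpa [hz] using (mem_filter.1 hx).2
  have := card_le_card this
  rw [card_singleton] at this
  omega

theorem card_subtype_nonCentral_add_one_le {T : Finset R} (h0 : 0 ∈ T) :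
    (T.subtype (· ∉ Set.center R)).card + 1 ≤ T.card := by
  rw [card_subtype]
  exact card_lt_card (filter_ssubset.2 ⟨0, h0, by simp⟩)

theorem commutingGraph_eq_bot (h : ∀ x : R, x ≠ 0 → (centralizerFinset x).card = 2) :
    commutingGraph R = ⊥ := by
  ext u v
  refine ⟨fun ⟨hne, huv⟩ => ?_, False.elim⟩
  have hu0 := ne_zero_of_notMem_center u.2
  have hv : (v : R) ∈ centralizerFinset (u : R) := mem_centralizerFinset.2 huv
  rw [centralizerFinset_eq_pair hu0 (h u hu0), mem_insert, mem_singleton] at hv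
  exact hv.elim (ne_zero_of_notMem_center v.2) fun h => hne (Subtype.ext h.symm)

theorem dominationNumber_add_card_biUnion_le (hz : Set.center R = {0}) (L : Finset R)
    (hL : ∀ a ∈ L, a ≠ 0) :
    (commutingGraph R).dominationNumber + (L.biUnion centralizerFinset).card
      ≤ Fintype.card R + L.card := by
  have hbound := (commutingGraph R).dominationNumber_add_card_le (L.subtype (· ∉ Set.center R))
    ((L.biUnion centralizerFinset).subtype (· ∉ Set.center R)) fun v hv hvL => by
      obtain ⟨a, ha, hav⟩ := mem_biUnion.1 (mem_subtype.1 hv)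
      refine ⟨⟨a, notMem_center_of_ne_zero hz (hL a ha)⟩, mem_subtype.2 ha, ?_, ?_⟩
      · rintro rfl
        exact hvL (mem_subtype.2 ha)
      · exact mem_centralizerFinset.1 hav
  have hL' : (L.subtype (· ∉ Set.center R)).card ≤ L.card := by
    rw [card_subtype]
    exact card_filter_le _ _
  have := card_le_card_subtype_nonCentral_add_one hz (L.biUnion centralizerFinset)
  have := card_nonCentral_add_one hz
  omega

theorem dominationNumber_compl_le {x y : R} (hxy : ¬Commute x y) :
    ((commutingGraph R)ᶜ).dominationNumber
      ≤ (centralizerFinset x ∩ centralizerFinset y).card + 1 := by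
  set X : {r : R // r ∉ Set.center R} := ⟨x, notMem_center_of_not_commute hxy⟩
  set Y : {r : R // r ∉ Set.center R} :=
    ⟨y, notMem_center_of_not_commute fun h => hxy h.symm⟩
  set I := (centralizerFinset x ∩ centralizerFinset y).subtype (· ∉ Set.center R)
  have hD : ((commutingGraph R)ᶜ).IsDominatingSet (insert X (insert Y I)) := by
    intro v hv
    simp only [mem_insert, not_or] at hv
    obtain ⟨hvX, hvY, hvI⟩ := hv
    by_cases hvx : (v : R) ∈ centralizerFinset x
    · refine ⟨Y, by simp, (SimpleGraph.compl_adj _ _ _).2 ⟨Ne.symm hvY, fun h => hvI ?_⟩⟩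
      exact mem_subtype.2 (mem_inter.2 ⟨hvx, mem_centralizerFinset.2 h.2⟩)
    · exact ⟨X, by simp, (SimpleGraph.compl_adj _ _ _).2
        ⟨Ne.symm hvX, fun h => hvx (mem_centralizerFinset.2 h.2)⟩⟩
  have hI : I.card + 1 ≤ (centralizerFinset x ∩ centralizerFinset y).card :=
    card_subtype_nonCentral_add_one_le
      (mem_inter.2 ⟨zero_mem_centralizerFinset x, zero_mem_centralizerFinset y⟩)
  have h1 := card_insert_le X (insert Y I)
  have h2 := card_insert_le Y I
  have := ((commutingGraph R)ᶜ).dominationNumber_le_card hD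
  omega

theorem dominationNumber_compl_le_one {x : R} (hx : x ∉ Set.center R)
    (h : (centralizerFinset x).card = 2) : ((commutingGraph R)ᶜ).dominationNumber ≤ 1 := by
  have hD : ((commutingGraph R)ᶜ).IsDominatingSet {⟨x, hx⟩} := by
    intro v hv
    refine ⟨⟨x, hx⟩, mem_singleton_self _,
      (SimpleGraph.compl_adj _ _ _).2 ⟨Ne.symm (by simpa using hv), ?_⟩⟩
    rintro ⟨hne, hxv⟩
    have hv' : (v : R) ∈ centralizerFinset x := mem_centralizerFinset.2 hxv
    rw [centralizerFinset_eq_pair (ne_zero_of_notMem_center hx) h, mem_insert,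
      mem_singleton] at hv'
    exact hv'.elim (ne_zero_of_notMem_center v.2) fun h => hne (Subtype.ext h.symm)
  simpa using ((commutingGraph R)ᶜ).dominationNumber_le_card hD

theorem dominationNumber_add_add_two_le_of_card_inter (hz : Set.center R = {0}) {x y : R}
    (hxy : ¬Commute x y)
    (h : 2 * (centralizerFinset x ∩ centralizerFinset y).card + 5
      ≤ (centralizerFinset x).card + (centralizerFinset y).card) :
    (commutingGraph R).dominationNumber + ((commutingGraph R)ᶜ).dominationNumber + 2
      ≤ Fintype.card R := by
  have hγ₁ := dominationNumber_add_card_biUnion_le hz {x, y} (by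
    simp only [mem_insert, mem_singleton, forall_eq_or_imp, forall_eq]
    exact ⟨ne_zero_of_not_commute hxy, ne_zero_of_not_commute fun h => hxy h.symm⟩)
  rw [biUnion_insert, singleton_biUnion] at hγ₁
  have hγ₂ := dominationNumber_compl_le hxy
  have := card_union_add_card_inter (centralizerFinset x) (centralizerFinset y)
  have := card_le_two (a := x) (b := y)
  omega

theorem dominationNumber_add_add_two_le_of_card_eq_three (hz : Set.center R = {0}) {x y : R}
    (hxy : ¬Commute x y) (hx : (centralizerFinset x).card = 3)
    (hy : (centralizerFinset y).card = 3) :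
    (commutingGraph R).dominationNumber + ((commutingGraph R)ᶜ).dominationNumber + 2
      ≤ Fintype.card R := by
  set z := x + y
  have hxz : ¬Commute x z := fun h =>
    hxy (by simpa [z] using h.sub_right (Commute.refl x))
  have hyz : ¬Commute y z := fun h =>
    hxy (by simpa [z] using (h.sub_right (Commute.refl y)).symm)
  have hz0 : z ≠ 0 := ne_zero_of_not_commute fun h => hxz h.symm
  have hz3 : 3 ≤ (centralizerFinset z).card := (two_le_card_centralizerFinset hz0).lt_of_ne
    fun h => card_centralizerFinset_ne_three hz0 h.symm hx
  have hinter {a b : R} (ha : (centralizerFinset a).card = 3) (hab : ¬Commute a b) :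
      (centralizerFinset a ∩ centralizerFinset b).card = 1 := by
    have := two_mul_card_centralizerFinset_inter_le_of_not_commute hab
    have := card_centralizerFinset_inter_pos a b
    omega
  have hixy := hinter hx hxy
  have hunion := card_union_union_add_two (zero_mem_centralizerFinset x)
    (zero_mem_centralizerFinset y) (zero_mem_centralizerFinset z) hixy (hinter hx hxz)
    (hinter hy hyz)
  have hγ₁ := dominationNumber_add_card_biUnion_le hz {x, y, z} (by
    simp only [mem_insert, mem_singleton, forall_eq_or_imp, forall_eq]
    exact ⟨ne_zero_of_not_commute hxy, ne_zero_of_not_commute fun h => hxy h.symm, hz0⟩)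
  rw [biUnion_insert, biUnion_insert, singleton_biUnion, ← union_assoc] at hγ₁
  have hγ₂ := dominationNumber_compl_le hxy
  have := card_le_three (a := x) (b := y) (c := z)
  omega

theorem six_le_card_centralizerFinset {x y t : R} (hxy : ¬Commute x y) (ht0 : t ≠ 0)
    (htx : t ∈ centralizerFinset x) (hty : t ∈ centralizerFinset y) :
    6 ≤ (centralizerFinset t).card := by
  have hx0 := ne_zero_of_not_commute hxy
  have hxt : x ≠ t := by
    rintro rfl
    exact hxy (mem_centralizerFinset.1 hty).symm
  have htx' := mem_centralizerFinset.1 htx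
  have h3 : 3 ≤ (centralizerFinset t ∩ centralizerFinset x).card := by
    rw [← card_eq_three.2 ⟨0, x, t, hx0.symm, ht0.symm, hxt, rfl⟩]
    exact card_le_card (by simp [insert_subset_iff, htx', htx'.symm])
  have := two_mul_card_centralizerFinset_inter_le (x := t) (y := x)
    (mem_centralizerFinset.2 (mem_centralizerFinset.1 hty).symm)
    (mt mem_centralizerFinset.1 hxy)
  omega

theorem dominationNumber_add_add_two_le_of_forall_three_le (hz : Set.center R = {0})
    {x y : R} (hxy : ¬Commute x y) (h3 : ∀ x : R, x ≠ 0 → 3 ≤ (centralizerFinset x).card) :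
    (commutingGraph R).dominationNumber + ((commutingGraph R)ᶜ).dominationNumber + 2
      ≤ Fintype.card R := by
  have hx := two_mul_card_centralizerFinset_inter_le_of_not_commute hxy
  have hy := two_mul_card_centralizerFinset_inter_le_of_not_commute fun h => hxy h.symm
  rw [inter_comm] at hy
  have hi := card_centralizerFinset_inter_pos x y
  have hx3 := h3 x (ne_zero_of_not_commute hxy)
  have hy3 := h3 y (ne_zero_of_not_commute fun h => hxy h.symm)
  by_cases hgood : 2 * (centralizerFinset x ∩ centralizerFinset y).card + 5
      ≤ (centralizerFinset x).card + (centralizerFinset y).card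
  · exact dominationNumber_add_add_two_le_of_card_inter hz hxy hgood
  obtain ⟨-, hx3, hy3⟩ | hi2 : (centralizerFinset x ∩ centralizerFinset y).card = 1 ∧
      (centralizerFinset x).card = 3 ∧ (centralizerFinset y).card = 3 ∨
      1 < (centralizerFinset x ∩ centralizerFinset y).card := by omega
  · exact dominationNumber_add_add_two_le_of_card_eq_three hz hxy hx3 hy3
  obtain ⟨t, ht, ht0⟩ := exists_mem_ne hi2 0
  obtain ⟨s, hts⟩ := exists_not_commute (notMem_center_of_ne_zero hz ht0)
  have ht6 := six_le_card_centralizerFinset hxy ht0 (mem_inter.1 ht).1 (mem_inter.1 ht).2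
  have hs := two_mul_card_centralizerFinset_inter_le_of_not_commute fun h => hts h.symm
  rw [inter_comm] at hs
  exact dominationNumber_add_add_two_le_of_card_inter hz hts (by omega)

theorem dominationNumber_add_add_two_le_of_card_eq_two (hz : Set.center R = {0}) {u v : R}
    (hu0 : u ≠ 0) (hu : (centralizerFinset u).card = 2) (hv0 : v ≠ 0)
    (hv : 3 ≤ (centralizerFinset v).card) :
    (commutingGraph R).dominationNumber + ((commutingGraph R)ᶜ).dominationNumber + 2
      ≤ Fintype.card R := by
  have hv4 : 4 ≤ (centralizerFinset v).card :=
    hv.lt_of_ne (card_centralizerFinset_ne_three hu0 hu).symm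
  have hγ₁ := dominationNumber_add_card_biUnion_le hz {v} (by simpa using hv0)
  rw [singleton_biUnion, card_singleton] at hγ₁
  have hγ₂ := dominationNumber_compl_le_one (notMem_center_of_ne_zero hz hu0) hu
  omega

theorem card_le_dominationNumber_add_of_forall_card_eq_two (hz : Set.center R = {0})
    {x y : R} (hxy : ¬Commute x y) (h : ∀ x : R, x ≠ 0 → (centralizerFinset x).card = 2) :
    Fintype.card R
      ≤ (commutingGraph R).dominationNumber + ((commutingGraph R)ᶜ).dominationNumber := by
  have : Nonempty {r : R // r ∉ Set.center R} := ⟨⟨x, notMem_center_of_not_commute hxy⟩⟩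
  have := ((commutingGraph R)ᶜ).dominationNumber_pos
  rw [commutingGraph_eq_bot h, SimpleGraph.dominationNumber_bot] at *
  have := card_nonCentral_add_one hz
  omega

end CommutingGraph

/-- Theorem A(ii): `γ(Γ(R)) + γ(Γ̄(R)) ≠ n - 1`. -/
theorem stmt_1 (R : Type*) [NonUnitalRing R] [Fintype R] (n : ℕ)
    (hcard : Fintype.card R = n)
    (hnc : ∃ x y : R, x * y ≠ y * x)
    (hz : Set.center R = {0}) :
    (commutingGraph R).dominationNumber + ((commutingGraph R)ᶜ).dominationNumber ≠ n - 1 := by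
  obtain ⟨x, y, hxy⟩ := hnc
  subst hcard
  have hn := Fintype.card_pos (α := R)
  by_cases h2 : ∃ u : R, u ≠ 0 ∧ (centralizerFinset u).card = 2
  · obtain ⟨u, hu0, hu⟩ := h2
    by_cases h3 : ∃ v : R, v ≠ 0 ∧ 3 ≤ (centralizerFinset v).card
    · obtain ⟨v, hv0, hv⟩ := h3
      have := dominationNumber_add_add_two_le_of_card_eq_two hz hu0 hu hv0 hv
      omega
    · push Not at h3
      have := card_le_dominationNumber_add_of_forall_card_eq_two hz hxy fun x hx =>
        (Nat.le_of_lt_succ (h3 x hx)).antisymm (two_le_card_centralizerFinset hx)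
      omega
  · push Not at h2
    have := dominationNumber_add_add_two_le_of_forall_three_le hz hxy fun x hx =>
      (two_le_card_centralizerFinset hx).lt_of_ne (h2 x hx).symm
    omega

end
end

section
/- Let R₁, …, R_t be finite non-commutative rings with |R_i| = n_i and Z(R_i) = {0}, and let δ_i be the minimum degree of the commuting graph Γ(R_i). If δ_i is odd for all 1 ≤ i ≤ t, then γ_s(Γ(R₁ × ⋯ × R_t)) ≤ (∏ᵢ n_i) - ∏ᵢ(δ_i + 2) + 2; otherwise (i.e. if some δ_i is even), γ_s(Γ(R₁ × ⋯ × R_t)) ≤ (∏ᵢ n_i) - ∏ᵢ(δ_i + 2) + 1. -/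
/-!
In a ring with center `{0}`, the centralizer of a non-central `w` consists of `0`, `w` and the
neighbours of `w` in `Γ`, so it has `deg w + 2` elements; hence every centralizer has at least
`δ + 2` elements. Centralizers in a direct product are products of centralizers, so every vertex
of `Γ(∏ Rᵢ)` has degree at least `m - 2` with `m = ∏ (δᵢ + 2)`. In a graph of minimum degree at
least `2k`, putting `-1` on any `k` vertices still leaves every closed neighbourhood a positive
sum. With `k = ⌊(m - 2) / 2⌋` and `∏ nᵢ - 1` vertices this gives the bound, whose two cases are
the parities of `m`.
-/

open scoped Classical

noncomputable section

open Finset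

lemma Finset.sum_ite_mem_neg_one_one {V : Type*} (s T : Finset V) :
    ∑ v ∈ s, (if v ∈ T then -1 else 1 : ℤ) = #s - 2 * #(s ∩ T) := by
  rw [sum_ite, sum_const, sum_const, filter_mem_eq_inter, filter_notMem_eq_sdiff]
  have := card_sdiff_add_card_inter s T
  simp only [nsmul_eq_mul]
  omega

namespace SimpleGraph

variable {V : Type*} [Fintype V] (G : SimpleGraph V)

lemma signedDominationNumber_le {f : V → ℤ} (hf : ∀ v, f v = 1 ∨ f v = -1)
    (hdom : ∀ v, 1 ≤ ∑ u ∈ univ.filter (fun u => G.Adj v u ∨ u = v), f u) :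
    G.signedDominationNumber ≤ ∑ v, f v := by
  refine csInf_le ⟨-(Fintype.card V : ℤ), ?_⟩ ⟨f, hf, hdom, rfl⟩
  rintro w ⟨g, hg, -, rfl⟩
  have hg' : ∀ v ∈ (univ : Finset V), (-1 : ℤ) ≤ g v := fun v _ => by
    rcases hg v with h | h <;> omega
  simpa using sum_le_sum hg'

lemma card_filter_adj_or_eq (v : V) :
    #(univ.filter (fun u => G.Adj v u ∨ u = v)) = G.degree v + 1 := by
  have : univ.filter (fun u => G.Adj v u ∨ u = v) = insert v (G.neighborFinset v) := by
    ext u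
    simp only [mem_filter, mem_univ, true_and, mem_insert, mem_neighborFinset]
    tauto
  rw [this, card_insert_of_notMem (by simp), card_neighborFinset_eq_degree]

lemma signedDominationNumber_le_card_sub_two_mul (k : ℕ) (hk : k ≤ Fintype.card V)
    (hdeg : ∀ v, 2 * k ≤ G.degree v) :
    G.signedDominationNumber ≤ Fintype.card V - 2 * k := by
  obtain ⟨T, -, rfl⟩ := exists_subset_card_eq (s := (univ : Finset V)) (by simpa using hk)
  calc G.signedDominationNumber ≤ ∑ v, (if v ∈ T then -1 else 1 : ℤ) := by
        refine G.signedDominationNumber_le (fun v => by split_ifs <;> simp) fun v => ?_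
        rw [sum_ite_mem_neg_one_one, card_filter_adj_or_eq]
        have hT := card_le_card
          (inter_subset_right (s₁ := univ.filter fun u => G.Adj v u ∨ u = v) (s₂ := T))
        have := hdeg v
        omega
    _ = Fintype.card V - 2 * #T := by rw [sum_ite_mem_neg_one_one, univ_inter, card_univ]

end SimpleGraph

section CommutingGraph

variable {A : Type*} [NonUnitalRing A] [Fintype A]

lemma filter_commute_eq_insert_zero_insert (hz : Set.center A = {0})
    (w : {x : A // x ∉ Set.center A}) [Fintype ((commutingGraph A).neighborSet w)] :
    univ.filter (Commute · (w : A)) = insert 0 (insert (w : A)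
      (((commutingGraph A).neighborFinset w).map (Function.Embedding.subtype _))) := by
  ext x
  simp only [mem_filter, mem_univ, true_and, mem_insert, mem_map,
    SimpleGraph.mem_neighborFinset, Function.Embedding.coe_subtype]
  constructor
  · intro hx
    by_cases h0 : x = 0
    · exact .inl h0
    by_cases hxw : x = w
    · exact .inr (.inl hxw)
    have hx' : x ∉ Set.center A := by simpa [hz] using h0
    exact .inr (.inr ⟨⟨x, hx'⟩, ⟨fun h => hxw (congrArg Subtype.val h).symm, hx.eq.symm⟩, rfl⟩)
  · rintro (rfl | rfl | ⟨u, ⟨-, hcomm⟩, rfl⟩)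
    · exact Commute.zero_left _
    · exact Commute.refl _
    · exact hcomm.symm

lemma card_filter_commute_eq_degree_add_two (hz : Set.center A = {0})
    (w : {x : A // x ∉ Set.center A}) [Fintype ((commutingGraph A).neighborSet w)] :
    #(univ.filter (Commute · (w : A))) = (commutingGraph A).degree w + 2 := by
  have hw : (w : A) ≠ 0 := by simpa [hz] using w.2
  rw [filter_commute_eq_insert_zero_insert hz, card_insert_of_notMem, card_insert_of_notMem,
    card_map, SimpleGraph.card_neighborFinset_eq_degree]
  · simp
  · simp [hw.symm]

lemma add_two_le_card_filter_commute (hz : Set.center A = {0}) {d : ℕ}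
    (hd : IsLeast {e : ℕ | ∃ v, (commutingGraph A).degree v = e} d) (y : A) :
    d + 2 ≤ #(univ.filter (Commute · y)) := by
  by_cases hy : y ∈ Set.center A
  · obtain ⟨v, rfl⟩ := hd.1
    obtain rfl : y = 0 := by simpa [hz] using hy
    rw [← card_filter_commute_eq_degree_add_two hz]
    simpa using card_le_univ _
  · rw [card_filter_commute_eq_degree_add_two hz ⟨y, hy⟩]
    have := hd.2 ⟨⟨y, hy⟩, rfl⟩
    omega

lemma card_compl_center_add_one (hz : Set.center A = {0})
    [Fintype {x : A // x ∉ Set.center A}] :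
    Fintype.card {x : A // x ∉ Set.center A} + 1 = Fintype.card A := by
  rw [Fintype.card_subtype_compl]
  simp only [hz, Set.mem_singleton_iff, Fintype.card_unique]
  exact Nat.sub_add_cancel Fintype.card_pos

end CommutingGraph

section Pi

variable {ι : Type*} {R : ι → Type*} [∀ i, NonUnitalRing (R i)]

lemma Pi.center_eq_singleton_zero (hz : ∀ i, Set.center (R i) = {0}) :
    Set.center (∀ i, R i) = {0} := by
  rw [Set.center_pi]
  simp only [hz]
  exact Set.univ_pi_singleton 0

variable [Fintype ι] [∀ i, Fintype (R i)]

lemma card_filter_commute_pi (u : ∀ i, R i) :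
    #(univ.filter (Commute · u)) = ∏ i, #(univ.filter (Commute · (u i))) := by
  simp only [← Fintype.card_subtype]
  rw [Fintype.card_congr ((Equiv.subtypeEquivRight fun _ => Pi.commute_iff).trans
    (Equiv.subtypePiEquivPi (p := fun i y => Commute y (u i)))), Fintype.card_pi]

lemma prod_add_two_le_degree_add_two (hz : ∀ i, Set.center (R i) = {0}) (δ : ι → ℕ)
    (hδ : ∀ i, IsLeast {d : ℕ | ∃ v, (commutingGraph (R i)).degree v = d} (δ i))
    (u : {x : ∀ i, R i // x ∉ Set.center (∀ i, R i)})
    [Fintype ((commutingGraph (∀ i, R i)).neighborSet u)] :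
    ∏ i, (δ i + 2) ≤ (commutingGraph (∀ i, R i)).degree u + 2 := by
  calc ∏ i, (δ i + 2) ≤ ∏ i, #(univ.filter (Commute · (u.1 i))) :=
        prod_le_prod' fun i _ => add_two_le_card_filter_commute (hz i) (hδ i) _
    _ = #(univ.filter (Commute · u.1)) := (card_filter_commute_pi _).symm
    _ = _ := card_filter_commute_eq_degree_add_two (Pi.center_eq_singleton_zero hz) u

end Pi

theorem stmt_7_general (t : ℕ)
    (R : Fin t → Type*) [∀ i, NonUnitalRing (R i)] [∀ i, Fintype (R i)]
    (n δ : Fin t → ℕ)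
    (hn : ∀ i, Fintype.card (R i) = n i)
    (hz : ∀ i, Set.center (R i) = {0})
    (hδ : ∀ i, IsLeast {d : ℕ | ∃ v, (commutingGraph (R i)).degree v = d} (δ i)) :
    ((∀ i, Odd (δ i)) →
      (commutingGraph (∀ i, R i)).signedDominationNumber ≤
        (∏ i, (n i : ℤ)) - (∏ i, ((δ i : ℤ) + 2)) + 2) ∧
    ((∃ i, Even (δ i)) →
      (commutingGraph (∀ i, R i)).signedDominationNumber ≤
        (∏ i, (n i : ℤ)) - (∏ i, ((δ i : ℤ) + 2)) + 1) := by
  set m := ∏ i, (δ i + 2) with hm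
  set N := ∏ i, n i with hN
  have hcard : Fintype.card {x : ∀ i, R i // x ∉ Set.center (∀ i, R i)} + 1 = N := by
    rw [card_compl_center_add_one (Pi.center_eq_singleton_zero hz), Fintype.card_pi]
    exact prod_congr rfl fun i _ => hn i
  have hmN : m ≤ N := prod_le_prod' fun i _ =>
    hn i ▸ (add_two_le_card_filter_commute (hz i) (hδ i) 0).trans (card_le_univ _)
  have hγ := (commutingGraph (∀ i, R i)).signedDominationNumber_le_card_sub_two_mul
    ((m - 2) / 2) (by omega) fun v => by
      have := prod_add_two_le_degree_add_two hz δ hδ v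
      omega
  have hcast : (∏ i, (n i : ℤ)) - ∏ i, ((δ i : ℤ) + 2) = (N : ℤ) - m := by
    simp only [hN, hm, Nat.cast_prod, Nat.cast_add, Nat.cast_ofNat]
  rw [hcast]
  constructor
  · intro hodd
    obtain ⟨r, hr⟩ : Odd m :=
      prod_induction _ Odd (fun _ _ => Odd.mul) odd_one fun i _ => (hodd i).add_even even_two
    omega
  · rintro ⟨i, hi⟩
    obtain ⟨r, hr⟩ : Even m :=
      even_iff_two_dvd.mpr ((hi.add even_two).two_dvd.trans (dvd_prod_of_mem _ (mem_univ i)))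
    omega

/-- Theorem E: an upper bound for the signed domination number of the commuting graph of a
direct product, where `δ i` is the minimum degree of `Γ(Rᵢ)`. -/
theorem stmt_7 (t : ℕ) (ht : 0 < t)
    (R : Fin t → Type*) [∀ i, NonUnitalRing (R i)] [∀ i, Fintype (R i)]
    (n δ : Fin t → ℕ)
    (hn : ∀ i, Fintype.card (R i) = n i)
    (hnc : ∀ i, ∃ x y : R i, x * y ≠ y * x)
    (hz : ∀ i, Set.center (R i) = {0})
    (hδ : ∀ i, IsLeast {d : ℕ | ∃ v, (commutingGraph (R i)).degree v = d} (δ i)) :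
    ((∀ i, Odd (δ i)) →
      (commutingGraph (∀ i, R i)).signedDominationNumber ≤
        (∏ i, (n i : ℤ)) - (∏ i, ((δ i : ℤ) + 2)) + 2) ∧
    ((∃ i, Even (δ i)) →
      (commutingGraph (∀ i, R i)).signedDominationNumber ≤
        (∏ i, (n i : ℤ)) - (∏ i, ((δ i : ℤ) + 2)) + 1) :=
  stmt_7_general t R n δ hn hz hδ
end
end
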